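/- arXiv:1401.0237 — 2 statements merged into one kernel-verified Lean document; each statement's English description precedes it below -/
import Mathlib

section
/- Let r ≥ 0, a > 0, b ∈ ℝ, γ ≥ 0, δ ∈ ℝ. Let P be a nonzero polynomial with real coefficients such that every complex root of P lies in the strip S(r) = {w ∈ ℂ : |Im w| ≤ r}, and define f : ℂ → ℂ by f(z) = exp(δz - γz²)·P(z). Let H(z) = e^{ib}·f(z + ia) - e^{-ib}·f(z - ia) (which equals 2i·sin(aD + b)f(z)). If H is not identically zero, then every zero z of H satisfies (Im z)² ≤ max(r² - a², 0). -/
/-!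
Because `‖exp (± b I)‖ = 1`, a zero `z` of `H` forces `‖f (z + a I)‖ = ‖f (z - a I)‖`, and by
conjugation symmetry it suffices to rule this out for `Im z > 0` with `(Im z)² + a² > r²`.
Put `ζ± = z ± a I`. The Gaussian factor gives
`‖exp (δζ₋ - γζ₋²)‖ = exp (-4γa Im z) ‖exp (δζ₊ - γζ₊²)‖`. The complex roots of the real
polynomial `P` are closed under conjugation, so `‖P ζ‖² = c² ∏ ‖ζ - w‖ ‖ζ - w̄‖` over the roots
`w` (`c` the leading coefficient), and for each root
`‖ζ₊ - w‖² ‖ζ₊ - w̄‖² - ‖ζ₋ - w‖² ‖ζ₋ - w̄‖² = 8 a Im z ((Re z - Re w)² + (Im z)² + a² - (Im w)²)`,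
which is positive. Hence `‖f ζ₋‖ < ‖f ζ₊‖` unless `P` is constant and `γ = 0`; then
`H z = exp (δ z) H 0`, which has no zeros since `H ≢ 0`.
-/

open Complex Polynomial ComplexConjugate

theorem Multiset.prod_map_lt_prod_map_of_nonneg {R ι : Type*} [CommSemiring R] [PartialOrder R]
    [IsStrictOrderedRing R] {s : Multiset ι} (hs : s ≠ 0) {f g : ι → R}
    (h0 : ∀ i ∈ s, 0 ≤ f i) (h : ∀ i ∈ s, f i < g i) :
    (s.map f).prod < (s.map g).prod := by
  by_cases hzero : ∃ i ∈ s, f i = 0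
  · obtain ⟨i, hi, hfi⟩ := hzero
    rw [Multiset.prod_eq_zero (hfi ▸ Multiset.mem_map_of_mem f hi)]
    refine Multiset.prod_pos fun x hx => ?_
    obtain ⟨j, hj, rfl⟩ := Multiset.mem_map.mp hx
    exact (h0 j hj).trans_lt (h j hj)
  · exact Multiset.prod_map_lt_prod_map hs f g
      (fun i hi => (h0 i hi).lt_of_ne' fun hfi => hzero ⟨i, hi, hfi⟩) h

theorem Polynomial.roots_map_algebraMap_map_conj (P : ℝ[X]) :
    (P.map (algebraMap ℝ ℂ)).roots.map conj = (P.map (algebraMap ℝ ℂ)).roots := by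
  rw [← (IsAlgClosed.splits _).roots_map, Polynomial.map_map]
  congr 2
  ext x
  simp

theorem Polynomial.norm_aeval_sq_eq_prod_roots (P : ℝ[X]) (ζ : ℂ) :
    ‖aeval ζ P‖ ^ 2 = P.leadingCoeff ^ 2 *
      ((P.map (algebraMap ℝ ℂ)).roots.map fun w => ‖ζ - w‖ * ‖ζ - conj w‖).prod := by
  set Q := P.map (algebraMap ℝ ℂ)
  have hnorm : ‖aeval ζ P‖ = |P.leadingCoeff| * (Q.roots.map fun w => ‖ζ - w‖).prod := by
    rw [aeval_def, ← eval_map, (IsAlgClosed.splits Q).eval_eq_prod_roots, norm_mul,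
      leadingCoeff_map, norm_algebraMap', Real.norm_eq_abs]
    congr 1
    simpa [Multiset.map_map] using map_multiset_prod (normHom (α := ℂ)) (Q.roots.map (ζ - ·))
  have hconj :
      (Q.roots.map fun w => ‖ζ - conj w‖).prod = (Q.roots.map fun w => ‖ζ - w‖).prod := by
    conv_rhs => rw [← P.roots_map_algebraMap_map_conj]
    rw [Multiset.map_map]
    rfl
  rw [hnorm, Multiset.prod_map_mul, hconj, mul_pow, sq_abs, sq (Multiset.prod _)]

theorem norm_mul_norm_conj_sub_lt {z w : ℂ} {a : ℝ} (ha : 0 < a) (hz : 0 < z.im)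
    (hw : w.im ^ 2 < z.im ^ 2 + a ^ 2) :
    ‖z - a * I - w‖ * ‖z - a * I - conj w‖ < ‖z + a * I - w‖ * ‖z + a * I - conj w‖ := by
  refine lt_of_pow_lt_pow_left₀ 2 (by positivity) ?_
  have hpos : 0 < 8 * a * z.im * ((z.re - w.re) ^ 2 + z.im ^ 2 + a ^ 2 - w.im ^ 2) := by
    have hgap : 0 < (z.re - w.re) ^ 2 + z.im ^ 2 + a ^ 2 - w.im ^ 2 := by
      linarith [sq_nonneg (z.re - w.re)]
    exact mul_pos (by positivity) hgap
  simp only [mul_pow, Complex.sq_norm, Complex.normSq_apply, sub_re, sub_im, add_re, add_im,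
    mul_re, mul_im, ofReal_re, ofReal_im, I_re, I_im, conj_re, conj_im]
  linarith

theorem Polynomial.norm_aeval_sub_lt_norm_aeval_add {P : ℝ[X]} (hP : P ≠ 0)
    (hdeg : 0 < P.natDegree) {r a : ℝ} (hroots : ∀ w : ℂ, aeval w P = 0 → |w.im| ≤ r)
    (ha : 0 < a) {z : ℂ} (hz : 0 < z.im) (hza : r ^ 2 < z.im ^ 2 + a ^ 2) :
    ‖aeval (z - a * I) P‖ < ‖aeval (z + a * I) P‖ := by
  refine lt_of_pow_lt_pow_left₀ 2 (norm_nonneg _) ?_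
  rw [norm_aeval_sq_eq_prod_roots, norm_aeval_sq_eq_prod_roots]
  have hroots_ne : (P.map (algebraMap ℝ ℂ)).roots ≠ 0 := by
    rw [← Multiset.card_pos, IsAlgClosed.card_roots_eq_natDegree, natDegree_map]
    exact hdeg
  refine mul_lt_mul_of_pos_left (Multiset.prod_map_lt_prod_map_of_nonneg hroots_ne
    (fun _ _ => by positivity) fun w hw => norm_mul_norm_conj_sub_lt ha hz ?_)
    (by positivity [leadingCoeff_ne_zero.mpr hP])
  have hw_root : aeval w P = 0 := by
    rw [mem_roots', IsRoot, eval_map_algebraMap] at hw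
    exact hw.2
  have hw_sq : w.im ^ 2 ≤ r ^ 2 := sq_le_sq.mpr ((hroots w hw_root).trans (le_abs_self r))
  linarith

theorem norm_exp_quadratic_sub_mul_I (γ δ a : ℝ) (z : ℂ) :
    ‖exp (δ * (z - a * I) - γ * (z - a * I) ^ 2)‖
      = Real.exp (-(4 * γ * a * z.im)) * ‖exp (δ * (z + a * I) - γ * (z + a * I) ^ 2)‖ := by
  rw [norm_exp, norm_exp, ← Real.exp_add]
  congr 1
  simp only [sub_re, add_re, mul_re, mul_im, sub_im, add_im, ofReal_re, ofReal_im, I_re, I_im,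
    sq]
  ring

noncomputable def gaussMulPoly (γ δ : ℝ) (P : ℝ[X]) (z : ℂ) : ℂ :=
  exp (δ * z - γ * z ^ 2) * aeval z P

theorem gaussMulPoly_conj (γ δ : ℝ) (P : ℝ[X]) (z : ℂ) :
    gaussMulPoly γ δ P (conj z) = conj (gaussMulPoly γ δ P z) := by
  simp [gaussMulPoly, aeval_conj, ← exp_conj]

theorem gaussMulPoly_zero_add {P : ℝ[X]} (hP : P.natDegree = 0) (δ : ℝ) (z w : ℂ) :
    gaussMulPoly 0 δ P (z + w) = exp (δ * z) * gaussMulPoly 0 δ P w := by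
  rw [eq_C_of_natDegree_eq_zero hP]
  simp only [gaussMulPoly, ofReal_zero, zero_mul, sub_zero, mul_add, exp_add, aeval_C]
  ring

theorem norm_gaussMulPoly_sub_lt {γ δ r a : ℝ} {P : ℝ[X]} (hγ : 0 ≤ γ) (hP : P ≠ 0)
    (hdeg : 0 < P.natDegree ∨ 0 < γ) (hroots : ∀ w : ℂ, aeval w P = 0 → |w.im| ≤ r)
    (ha : 0 < a) {z : ℂ} (hz : 0 < z.im) (hza : r ^ 2 < z.im ^ 2 + a ^ 2) :
    ‖gaussMulPoly γ δ P (z - a * I)‖ < ‖gaussMulPoly γ δ P (z + a * I)‖ := by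
  rw [gaussMulPoly, gaussMulPoly, norm_mul, norm_mul, norm_exp_quadratic_sub_mul_I, mul_assoc]
  set E := ‖exp (δ * (z + a * I) - γ * (z + a * I) ^ 2)‖
  have hE : 0 < E := norm_pos_iff.mpr (exp_ne_zero _)
  rcases Nat.eq_zero_or_pos P.natDegree with hdeg0 | hdeg
  · have hγ : 0 < γ := hdeg.resolve_left hdeg0.not_gt
    have hdecay : Real.exp (-(4 * γ * a * z.im)) < 1 := by
      rw [Real.exp_lt_one_iff, neg_lt_zero]
      positivity
    rw [eq_C_of_natDegree_eq_zero hdeg0, aeval_C, aeval_C]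
    have hc : P.coeff 0 ≠ 0 := by
      rwa [eq_C_of_natDegree_eq_zero hdeg0, Ne, C_eq_zero] at hP
    exact mul_lt_of_lt_one_left (mul_pos hE (by simpa using hc)) hdecay
  · have hdecay : Real.exp (-(4 * γ * a * z.im)) ≤ 1 := by
      rw [Real.exp_le_one_iff, neg_nonpos]
      positivity
    calc Real.exp (-(4 * γ * a * z.im)) * (E * ‖aeval (z - a * I) P‖)
        ≤ E * ‖aeval (z - a * I) P‖ := mul_le_of_le_one_left (by positivity) hdecay
      _ < E * ‖aeval (z + a * I) P‖ :=
        mul_lt_mul_of_pos_left (norm_aeval_sub_lt_norm_aeval_add hP hdeg hroots ha hz hza) hE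

theorem norm_gaussMulPoly_sub_ne {γ δ r a : ℝ} {P : ℝ[X]} (hγ : 0 ≤ γ) (hP : P ≠ 0)
    (hdeg : 0 < P.natDegree ∨ 0 < γ) (hroots : ∀ w : ℂ, aeval w P = 0 → |w.im| ≤ r)
    (ha : 0 < a) {z : ℂ} (hz : z.im ≠ 0) (hza : r ^ 2 < z.im ^ 2 + a ^ 2) :
    ‖gaussMulPoly γ δ P (z - a * I)‖ ≠ ‖gaussMulPoly γ δ P (z + a * I)‖ := by
  rcases hz.lt_or_gt with hneg | hpos
  · have hlt := norm_gaussMulPoly_sub_lt (δ := δ) hγ hP hdeg hroots ha (z := conj z)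
      (by simpa using hneg) (by simpa using hza)
    have hminus : conj z - a * I = conj (z + a * I) := by
      rw [map_add, map_mul, conj_ofReal, conj_I]; ring
    have hplus : conj z + a * I = conj (z - a * I) := by
      rw [map_sub, map_mul, conj_ofReal, conj_I]; ring
    rw [hminus, hplus, gaussMulPoly_conj, gaussMulPoly_conj, norm_conj, norm_conj] at hlt
    exact hlt.ne'
  · exact (norm_gaussMulPoly_sub_lt hγ hP hdeg hroots ha hpos hza).ne

theorem norm_eq_norm_of_exp_mul_sub_exp_neg_mul_eq_zero {b : ℝ} {u v : ℂ}
    (h : exp (b * I) * u - exp (-(b * I)) * v = 0) : ‖u‖ = ‖v‖ := by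
  have hnorm := congrArg norm (sub_eq_zero.mp h)
  rwa [norm_mul, norm_mul, norm_exp_ofReal_mul_I, ← neg_mul, ← ofReal_neg, norm_exp_ofReal_mul_I,
    one_mul, one_mul] at hnorm

theorem sin_operator_strip_decrease_general (r a b γ δ : ℝ) (ha : 0 < a) (hγ : 0 ≤ γ)
    (P : Polynomial ℝ) (hP : P ≠ 0)
    (hroots : ∀ w : ℂ, Polynomial.aeval w P = 0 → |w.im| ≤ r)
    (f H : ℂ → ℂ)
    (hf : ∀ z : ℂ, f z = Complex.exp ((δ : ℂ) * z - (γ : ℂ) * z ^ 2) * Polynomial.aeval z P)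
    (hH : ∀ z : ℂ, H z = Complex.exp ((b : ℂ) * Complex.I) * f (z + a * Complex.I)
        - Complex.exp (-((b : ℂ) * Complex.I)) * f (z - a * Complex.I))
    (hH0 : ∃ z : ℂ, H z ≠ 0) :
    ∀ z : ℂ, H z = 0 → z.im ^ 2 ≤ max (r ^ 2 - a ^ 2) 0 := by
  obtain rfl : f = gaussMulPoly γ δ P := funext hf
  intro z hz
  by_contra hcon
  have him : z.im ≠ 0 := fun h => hcon (by simp [h])
  have hza : r ^ 2 < z.im ^ 2 + a ^ 2 := by
    linarith [(le_max_left _ _).trans_lt (not_le.mp hcon)]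
  by_cases hdegenerate : P.natDegree = 0 ∧ γ = 0
  · obtain ⟨hdeg0, rfl⟩ := hdegenerate
    have hshift : ∀ ζ, H ζ = exp (δ * ζ) * H 0 := by
      intro ζ
      simp only [hH, zero_add, zero_sub, sub_eq_add_neg ζ, gaussMulPoly_zero_add hdeg0]
      ring
    obtain ⟨z₀, hz₀⟩ := hH0
    rw [hshift] at hz hz₀
    exact hz₀ (by rw [(mul_eq_zero.mp hz).resolve_left (exp_ne_zero _), mul_zero])
  · have hdeg : 0 < P.natDegree ∨ 0 < γ := by
      contrapose! hdegenerate
      exact ⟨by omega, by linarith⟩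
    exact norm_gaussMulPoly_sub_ne hγ hP hdeg hroots ha him hza
      (norm_eq_norm_of_exp_mul_sub_exp_neg_mul_eq_zero (hH z ▸ hz)).symm

theorem sin_operator_strip_decrease (r a b γ δ : ℝ) (hr : 0 ≤ r) (ha : 0 < a) (hγ : 0 ≤ γ)
    (P : Polynomial ℝ) (hP : P ≠ 0)
    (hroots : ∀ w : ℂ, Polynomial.aeval w P = 0 → |w.im| ≤ r)
    (f H : ℂ → ℂ)
    (hf : ∀ z : ℂ, f z = Complex.exp ((δ : ℂ) * z - (γ : ℂ) * z ^ 2) * Polynomial.aeval z P)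
    (hH : ∀ z : ℂ, H z = Complex.exp ((b : ℂ) * Complex.I) * f (z + a * Complex.I)
        - Complex.exp (-((b : ℂ) * Complex.I)) * f (z - a * Complex.I))
    (hH0 : ∃ z : ℂ, H z ≠ 0) :
    ∀ z : ℂ, H z = 0 → z.im ^ 2 ≤ max (r ^ 2 - a ^ 2) 0 :=
  sin_operator_strip_decrease_general r a b γ δ ha hγ P hP hroots f H hf hH hH0
end

section
/- Let c : ℕ → ℂ and φ : ℂ → ℂ be such that for every w ∈ ℂ, HasSum (fun n => c(n) * w^n) (φ(w)), and such that c(n) = 0 for all odd n. Let a > 0 and r > 0 be real, and define f_a : ℂ → ℂ by f_a(z) = cos(a(z - ir))·cos(a(z + ir)). Then for every z ∈ ℂ, HasSum (fun n => c(n) * iteratedDeriv n f_a z) ((φ(2a*I) * Complex.cos(2*a*z) + φ(0) * Complex.cosh(2*a*r)) / 2). -/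
open Complex

/-! By the product-to-sum formula `f_a = (cos (2 a ·) + cosh (2 a r)) / 2`. A derivative
of even order `n` multiplies `cos (2 a z)` by `(2 a i) ^ n` and the constant by `0 ^ n`, and odd orders
are killed by the coefficients of the even function `φ`; so the series splits into the power series of
`φ` at `2 a i` and at `0`. -/

theorem cos_mul_sub_I_mul_mul_cos_mul_add_I_mul (a r z : ℂ) :
    cos (a * (z - I * r)) * cos (a * (z + I * r)) = (cos (2 * a * z) + cosh (2 * a * r)) / 2 := by
  have hprod : ∀ A B : ℂ, cos A * cos B = (cos (A + B) + cos (A - B)) / 2 := fun A B => by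
    rw [cos_add, cos_sub]; ring
  rw [hprod, show a * (z - I * r) - a * (z + I * r) = -(2 * a * r * I) by ring, cos_neg,
    cos_mul_I]
  ring_nf

theorem iteratedDeriv_cos_const_mul_of_even (b z : ℂ) {n : ℕ} (hn : Even n) :
    iteratedDeriv n (fun w => cos (b * w)) z = (b * I) ^ n * cos (b * z) := by
  obtain ⟨k, rfl⟩ := hn
  rw [← two_mul, iteratedDeriv_comp_const_mul contDiff_cos, iteratedDeriv_even_cos]
  simp only [Pi.mul_apply, Pi.pow_apply, Pi.neg_apply, Pi.one_apply]
  rw [mul_pow, pow_mul I, I_sq]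
  ring

theorem iteratedDeriv_cos_const_mul_add_const_div_two_of_even (b k z : ℂ) {n : ℕ}
    (hn : Even n) :
    iteratedDeriv n (fun w => (cos (b * w) + k) / 2) z
      = (b * I) ^ n * (cos (b * z) / 2) + 0 ^ n * (k / 2) := by
  have hcos : ContDiffAt ℂ n (fun w => cos (b * w)) z := by fun_prop
  rw [iteratedDeriv_div_const, iteratedDeriv_fun_add hcos contDiffAt_const,
    iteratedDeriv_cos_const_mul_of_even b z hn, iteratedDeriv_const, zero_pow_eq]
  split_ifs <;> ring

theorem hasSum_coeff_mul_of_even (c : ℕ → ℂ) (φ : ℂ → ℂ)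
    (hφ : ∀ w : ℂ, HasSum (fun n : ℕ => c n * w ^ n) (φ w))
    (hodd : ∀ n : ℕ, Odd n → c n = 0) {u : ℕ → ℂ} {b x y : ℂ}
    (hu : ∀ n, Even n → u n = b ^ n * x + 0 ^ n * y) :
    HasSum (fun n => c n * u n) (φ b * x + φ 0 * y) := by
  have hterm : ∀ n, c n * u n = c n * b ^ n * x + c n * 0 ^ n * y := fun n => by
    rcases Nat.even_or_odd n with he | ho
    · rw [hu n he]; ring
    · simp [hodd n ho]
  simpa only [hterm] using ((hφ b).mul_right x).add ((hφ 0).mul_right y)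

theorem operator_on_extremal_function_general (c : ℕ → ℂ) (φ : ℂ → ℂ)
    (hφ : ∀ w : ℂ, HasSum (fun n : ℕ => c n * w ^ n) (φ w))
    (hodd : ∀ n : ℕ, Odd n → c n = 0) (a r : ℝ)
    (f_a : ℂ → ℂ)
    (hf_a : ∀ z : ℂ, f_a z = Complex.cos ((a : ℂ) * (z - Complex.I * (r : ℂ)))
        * Complex.cos ((a : ℂ) * (z + Complex.I * (r : ℂ)))) (z : ℂ) :
    HasSum (fun n : ℕ => c n * iteratedDeriv n f_a z)
      ((φ (2 * (a : ℂ) * Complex.I) * Complex.cos (2 * (a : ℂ) * z)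
        + φ 0 * Complex.cosh (2 * (a : ℂ) * (r : ℂ))) / 2) := by
  have hf : f_a = fun w => (cos (2 * a * w) + cosh (2 * a * r)) / 2 := funext fun w => by
    rw [hf_a, cos_mul_sub_I_mul_mul_cos_mul_add_I_mul]
  rw [hf, add_div, mul_div_assoc, mul_div_assoc]
  exact hasSum_coeff_mul_of_even c φ hφ hodd fun n hn =>
    iteratedDeriv_cos_const_mul_add_const_div_two_of_even _ _ z hn

theorem operator_on_extremal_function (c : ℕ → ℂ) (φ : ℂ → ℂ)
    (hφ : ∀ w : ℂ, HasSum (fun n : ℕ => c n * w ^ n) (φ w))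
    (hodd : ∀ n : ℕ, Odd n → c n = 0) (a r : ℝ) (ha : 0 < a) (hr : 0 < r)
    (f_a : ℂ → ℂ)
    (hf_a : ∀ z : ℂ, f_a z = Complex.cos ((a : ℂ) * (z - Complex.I * (r : ℂ)))
        * Complex.cos ((a : ℂ) * (z + Complex.I * (r : ℂ)))) (z : ℂ) :
    HasSum (fun n : ℕ => c n * iteratedDeriv n f_a z)
      ((φ (2 * (a : ℂ) * Complex.I) * Complex.cos (2 * (a : ℂ) * z)
        + φ 0 * Complex.cosh (2 * (a : ℂ) * (r : ℂ))) / 2) :=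
  operator_on_extremal_function_general c φ hφ hodd a r f_a hf_a z
end
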